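/- With θ_j, θ'_j as above (θ_j = (1/√2, (3/√20)e_j, −1/√20), θ'_j = (−1/√2, −(3/√20)e_j, −1/√20)) and the network F(x) := (1/d)·Σ_{j=1}^{d/2} [w_j φ(⟨r_j,x⟩+b_j) + w'_j φ(⟨r'_j,x⟩+b'_j)], for any input x = y·e_{j*} with y ∈ {±1} and j* ≤ d/2, the gradient of F at x (where defined) is a nonzero scalar multiple of e_{j*}. -/

import Mathlib

/-!
The neurons `θ_j`, `θ'_j` together compute `(1/√2) · S((3/√20) x_j)`, where
`S(t) = φ(t - β) - φ(-t - β)` with `β = 1/√20` is soft thresholding. Hence `F` is a sum of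
functions of single coordinates, and the `j`-th coordinate of its gradient is proportional to
`S'((3/√20) x_j)`. Now `S' = 0` on the dead zone `|t| < β` and `S' = 1` for `|t| > β`, and at
`x = ±e_{j*}` only the coordinate `j*` leaves the dead zone, because `3/√20 > 1/√20`.
-/

noncomputable def softThreshold (β t : ℝ) : ℝ := max (t - β) 0 - max (-t - β) 0

theorem softThreshold_eq_zero {β t : ℝ} (h : |t| ≤ β) : softThreshold β t = 0 := by
  have := abs_le.mp h
  rw [softThreshold, max_eq_right (by linarith), max_eq_right (by linarith), sub_zero]

theorem softThreshold_eq_sub {β t : ℝ} (hβ : 0 ≤ β) (h : β ≤ t) :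
    softThreshold β t = t - β := by
  rw [softThreshold, max_eq_left (by linarith), max_eq_right (by linarith), sub_zero]

theorem softThreshold_eq_add {β t : ℝ} (hβ : 0 ≤ β) (h : t ≤ -β) :
    softThreshold β t = t + β := by
  rw [softThreshold, max_eq_right (by linarith), max_eq_left (by linarith)]
  ring

theorem hasDerivAt_softThreshold_of_abs_lt {β t : ℝ} (h : |t| < β) :
    HasDerivAt (softThreshold β) 0 t := by
  refine (hasDerivAt_const t 0).congr_of_eventuallyEq ?_
  filter_upwards [(isOpen_lt continuous_abs continuous_const).mem_nhds h] with u hu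
  exact softThreshold_eq_zero (le_of_lt hu)

theorem hasDerivAt_softThreshold_of_lt_abs {β t : ℝ} (hβ : 0 ≤ β) (h : β < |t|) :
    HasDerivAt (softThreshold β) 1 t := by
  rcases lt_abs.mp h with h | h
  · refine ((hasDerivAt_id t).sub_const β).congr_of_eventuallyEq ?_
    filter_upwards [Ioi_mem_nhds h] with u hu
    exact softThreshold_eq_sub hβ (le_of_lt hu)
  · refine ((hasDerivAt_id t).add_const β).congr_of_eventuallyEq ?_
    filter_upwards [Iio_mem_nhds (lt_neg.mp h)] with u hu
    exact softThreshold_eq_add hβ (le_of_lt hu)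

theorem hasGradientAt_sum_apply {ι : Type*} [Fintype ι] {f : ι → ℝ → ℝ} {f' : ι → ℝ}
    {x : EuclideanSpace ℝ ι} (hf : ∀ i, HasDerivAt (f i) (f' i) (x i)) :
    HasGradientAt (fun v : EuclideanSpace ℝ ι => ∑ i, f i (v i)) (WithLp.toLp 2 f') x := by
  rw [hasGradientAt_iff_hasFDerivAt]
  have hterm (i : ι) : HasFDerivAt (fun v : EuclideanSpace ℝ ι => f i (v i))
      (f' i • EuclideanSpace.proj (𝕜 := ℝ) i) x :=
    (hf i).comp_hasFDerivAt x (EuclideanSpace.proj (𝕜 := ℝ) i).hasFDerivAt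
  refine (HasFDerivAt.fun_sum (u := Finset.univ) fun i _ => hterm i).congr_fderiv ?_
  ext v
  simp [InnerProductSpace.toDual_apply_apply, EuclideanSpace.inner_eq_star_dotProduct, dotProduct,
    mul_comm]

theorem hasGradientAt_sum_softThreshold_smul_single {ι : Type*} [Fintype ι] [DecidableEq ι]
    (a : ι → ℝ) {β s y : ℝ} (hβ : 0 < β) (i : ι) (hy : β < |s * y|) :
    HasGradientAt (fun v : EuclideanSpace ℝ ι => ∑ j, a j * softThreshold β (s * v j))
      ((a i * s) • EuclideanSpace.single i 1) (y • EuclideanSpace.single i 1) := by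
  have hcoord (j : ι) : HasDerivAt (fun t => a j * softThreshold β (s * t))
      ((Pi.single i (a i * s) : ι → ℝ) j) ((y • EuclideanSpace.single i (1 : ℝ)) j) := by
    have hchain {t δ : ℝ} (h : HasDerivAt (softThreshold β) δ (s * t)) :
        HasDerivAt (fun t => a j * softThreshold β (s * t)) (a j * (δ * (s * 1))) t :=
      (h.comp t ((hasDerivAt_id' t).const_mul s)).const_mul (a j)
    by_cases hji : j = i
    · subst hji
      simpa [mul_comm] using hchain (hasDerivAt_softThreshold_of_lt_abs hβ.le hy)
    · simpa [hji] using hchain (t := 0) (hasDerivAt_softThreshold_of_abs_lt (by simpa using hβ))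
  have hgrad : (a i * s) • EuclideanSpace.single i (1 : ℝ) =
      WithLp.toLp 2 (Pi.single i (a i * s)) := by
    ext j
    by_cases hji : j = i <;> simp [hji]
  rw [hgrad]
  exact hasGradientAt_sum_apply hcoord

theorem stmt_17_general (d : ℕ)
    (jstar : Fin d) (hj : (jstar : ℕ) < d / 2)
    (y : ℝ) (hy : y = 1 ∨ y = -1)
    (x : EuclideanSpace ℝ (Fin d))
    (hxdef : x = y • EuclideanSpace.single jstar (1 : ℝ))
    (F : EuclideanSpace ℝ (Fin d) → ℝ)
    (hF : F = fun v =>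
      (1 / (d : ℝ)) * ∑ j : Fin d,
        if (j : ℕ) < d / 2 then
          (1 / Real.sqrt 2) *
              max ((inner ℝ ((3 / Real.sqrt 20) • EuclideanSpace.single j (1 : ℝ)) v : ℝ) +
                (-(1 / Real.sqrt 20))) 0 +
            (-(1 / Real.sqrt 2)) *
              max ((inner ℝ (-((3 / Real.sqrt 20) • EuclideanSpace.single j (1 : ℝ))) v : ℝ) +
                (-(1 / Real.sqrt 20))) 0
        else 0) :
    ∃ c : ℝ, c ≠ 0 ∧ HasGradientAt F (c • EuclideanSpace.single jstar (1 : ℝ)) x := by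
  set s : ℝ := 3 / Real.sqrt 20
  set β : ℝ := 1 / Real.sqrt 20
  let a (j : Fin d) : ℝ := 1 / d * if (j : ℕ) < d / 2 then 1 / Real.sqrt 2 else 0
  have hFa : F = fun v => ∑ j, a j * softThreshold β (s * v j) := by
    subst hF
    funext v
    simp only [a, Finset.mul_sum, inner_neg_left, real_inner_smul_left,
      EuclideanSpace.inner_single_left, map_one, one_mul, softThreshold]
    refine Finset.sum_congr rfl fun j _ => ?_
    split_ifs
    · simp only [sub_eq_add_neg]
      ring
    · simp
  have hβ : 0 < β := by positivity
  have hsy : β < |s * y| := by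
    have hβs : β < s := by simp only [β, s]; gcongr; norm_num
    rcases hy with rfl | rfl <;> simpa [abs_of_pos (show 0 < s by positivity)] using hβs
  have hd : (0 : ℝ) < d := Nat.cast_pos.mpr jstar.pos
  refine ⟨a jstar * s, by simp only [a, if_pos hj]; positivity, ?_⟩
  rw [hFa, hxdef]
  exact hasGradientAt_sum_softThreshold_smul_single a hβ jstar hsy

theorem stmt_17 (d : ℕ) (hd2 : 2 ≤ d) (hde : Even d)
    (jstar : Fin d) (hj : (jstar : ℕ) < d / 2)
    (y : ℝ) (hy : y = 1 ∨ y = -1)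
    (x : EuclideanSpace ℝ (Fin d))
    (hxdef : x = y • EuclideanSpace.single jstar (1 : ℝ))
    (F : EuclideanSpace ℝ (Fin d) → ℝ)
    (hF : F = fun v =>
      (1 / (d : ℝ)) * ∑ j : Fin d,
        if (j : ℕ) < d / 2 then
          (1 / Real.sqrt 2) *
              max ((inner ℝ ((3 / Real.sqrt 20) • EuclideanSpace.single j (1 : ℝ)) v : ℝ) +
                (-(1 / Real.sqrt 20))) 0 +
            (-(1 / Real.sqrt 2)) *
              max ((inner ℝ (-((3 / Real.sqrt 20) • EuclideanSpace.single j (1 : ℝ))) v : ℝ) +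
                (-(1 / Real.sqrt 20))) 0
        else 0) :
    ∃ c : ℝ, c ≠ 0 ∧ HasGradientAt F (c • EuclideanSpace.single jstar (1 : ℝ)) x :=
  stmt_17_general d jstar hj y hy x hxdef F hF
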